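/- Let a, b be positive real numbers. Then ∫₀^∞ x I_{1/2}(a x) K_{1/2}(a x) K_{1/2}²(b x) dx = (π/(4ab)) · ln(1 + a/b). -/

import Mathlib

open MeasureTheory Real

noncomputable def besselK (ν x : ℝ) : ℝ :=
  ∫ t in Set.Ioi (0:ℝ), Real.exp (-x * Real.cosh t) * Real.cosh (ν * t)
noncomputable def besselI (ν x : ℝ) : ℝ :=
  ∑' k : ℕ, (1 / ((k.factorial : ℝ) * Real.Gamma ((k : ℝ) + ν + 1))) * (x / 2) ^ (2 * (k : ℝ) + ν)

open Set

section Aux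

lemma sinh_half_image : (fun t : ℝ => Real.sinh (t / 2)) '' (Ioi 0) = Ioi 0 := by
  ext y
  constructor
  · rintro ⟨t, ht, rfl⟩
    exact Real.sinh_pos_iff.2 (by simpa using half_pos (show (0:ℝ) < t from ht))
  · intro hy
    exact ⟨2 * Real.arsinh y, by simpa using Real.arsinh_pos_iff.2 hy,
      by show Real.sinh (2 * Real.arsinh y / 2) = y
         rw [show (2:ℝ) * Real.arsinh y / 2 = Real.arsinh y by ring, Real.sinh_arsinh]⟩

lemma besselK_half {x : ℝ} (hx : 0 < x) :
    besselK (1/2) x = Real.sqrt (π / (2 * x)) * Real.exp (-x) := by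
  have key : (∫ u in Ioi (0:ℝ), Real.exp (-(2*x) * u ^ 2))
      = ∫ t in Ioi (0:ℝ), |Real.cosh (t/2) / 2| • Real.exp (-(2*x) * Real.sinh (t/2) ^ 2) := by
    have h1 : ∀ t ∈ Ioi (0:ℝ), HasDerivWithinAt (fun t : ℝ => Real.sinh (t/2))
        (Real.cosh (t/2) / 2) (Ioi 0) t := fun t _ => by
      have := ((Real.hasDerivAt_sinh (t/2)).comp t
        ((hasDerivAt_id t).div_const 2)).hasDerivWithinAt (s := Ioi 0)
      exact this.congr_deriv (by ring)
    have h2 : Set.InjOn (fun t : ℝ => Real.sinh (t/2)) (Ioi 0) := fun s _ t _ h => by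
      have := Real.sinh_injective h; linarith
    have := integral_image_eq_integral_abs_deriv_smul measurableSet_Ioi h1 h2
      (fun u => Real.exp (-(2*x) * u ^ 2))
    rw [sinh_half_image] at this
    exact this
  rw [integral_gaussian_Ioi] at key
  have hcosh : ∀ t : ℝ, Real.cosh t = 2 * Real.sinh (t/2) ^ 2 + 1 := by
    intro t
    have := Real.cosh_two_mul (t/2)
    have h2 := Real.cosh_sq (t/2)
    rw [show 2 * (t/2) = t by ring] at this
    rw [this, h2]; ring
  have : besselK (1/2) x
      = ∫ t in Ioi (0:ℝ), Real.exp (-x) * (Real.cosh (t/2) * Real.exp (-(2*x) * Real.sinh (t/2) ^ 2)) := by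
    unfold besselK
    apply integral_congr_ae
    filter_upwards with t
    rw [hcosh t, show -x * (2 * Real.sinh (t/2) ^ 2 + 1)
        = (-(2*x) * Real.sinh (t/2) ^ 2) + (-x) by ring, Real.exp_add,
      show (1/2 : ℝ) * t = t / 2 by ring]
    ring
  rw [this, integral_const_mul]
  have h2 : ∀ t : ℝ, Real.cosh (t/2) * Real.exp (-(2*x) * Real.sinh (t/2) ^ 2)
      = 2 * (|Real.cosh (t/2) / 2| • Real.exp (-(2*x) * Real.sinh (t/2) ^ 2)) := by
    intro t
    rw [abs_of_pos (by positivity), smul_eq_mul]; ring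
  simp_rw [h2]
  rw [integral_const_mul, ← key]
  rw [show π / (2*x) = π / (2*x) from rfl]
  rw [mul_comm]
  congr 1
  rw [mul_comm]
  field_simp

lemma sq_eq_of_nonneg {a b : ℝ} (ha : 0 ≤ a) (hb : 0 ≤ b) (h : a^2 = b^2) : a = b := by
  have : (a - b) * (a + b) = 0 := by ring_nf; nlinarith
  rcases mul_eq_zero.1 this with h' | h'
  · linarith
  · have : a = 0 := by linarith
    have : b = 0 := by linarith
    linarith

lemma Gamma_nat_add_three_halves (k : ℕ) :
    Real.Gamma ((k : ℝ) + 3/2) = Real.sqrt π * (2*k+1).factorial / (4 ^ k * k.factorial * 2) := by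
  induction k with
  | zero =>
      simp only [Nat.cast_zero, zero_add]
      rw [show (3/2 : ℝ) = 1/2 + 1 by norm_num, Real.Gamma_add_one (by norm_num),
        Real.Gamma_one_half_eq]
      norm_num
      ring
  | succ n ih =>
      have : ((n+1 : ℕ) : ℝ) + 3/2 = ((n : ℝ) + 3/2) + 1 := by push_cast; ring
      rw [this, Real.Gamma_add_one (by positivity), ih]
      have h1 : (2*(n+1)+1).factorial = (2*n+3) * ((2*n+2) * (2*n+1).factorial) := by
        rw [show 2*(n+1)+1 = (2*n+2)+1 by ring, Nat.factorial_succ,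
          show 2*n+2 = (2*n+1)+1 by ring, Nat.factorial_succ]
      have h2 : ((n+1 : ℕ)).factorial = (n+1) * n.factorial := Nat.factorial_succ n
      rw [h1, h2]
      push_cast
      field_simp
      ring

lemma besselI_half {x : ℝ} (hx : 0 < x) :
    besselI (1/2) x = Real.sqrt (2 / (π * x)) * Real.sinh x := by
  unfold besselI
  have hterm : ∀ k : ℕ, (1 / ((k.factorial : ℝ) * Real.Gamma ((k : ℝ) + 1/2 + 1))) * (x / 2) ^ (2 * (k : ℝ) + 1/2)
      = Real.sqrt (2 / (π * x)) * (x ^ (2*k+1) / ((2*k+1).factorial : ℝ)) := by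
    intro k
    have hb : (0:ℝ) < x / 2 := by linarith
    have hpow : (x / 2 : ℝ) ^ (2 * (k : ℝ) + 1/2) = (x/2) ^ (2*k) * Real.sqrt (x/2) := by
      rw [show 2 * (k : ℝ) + 1/2 = ((2*k : ℕ) : ℝ) + 1/2 by push_cast; ring,
        Real.rpow_add hb, Real.rpow_natCast, Real.sqrt_eq_rpow]
    have hg : (k : ℝ) + 1/2 + 1 = (k : ℝ) + 3/2 := by ring
    rw [hg, Gamma_nat_add_three_halves, hpow]
    have h4 : ((x:ℝ)/2) ^ (2*k) = x ^ (2*k) / 4 ^ k := by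
      rw [div_pow, show ((2:ℝ)) ^ (2*k) = 4 ^ k by rw [pow_mul]; norm_num]
    have key : Real.sqrt (2/(π*x)) * x = 2 / Real.sqrt π * Real.sqrt (x/2) := by
      apply sq_eq_of_nonneg (by positivity) (by positivity)
      simp only [mul_pow, div_pow]
      rw [Real.sq_sqrt (by positivity), Real.sq_sqrt Real.pi_pos.le, Real.sq_sqrt hb.le]
      field_simp
    have hsπ : Real.sqrt π ≠ 0 := by positivity
    have hfk : ((2*k+1).factorial : ℝ) ≠ 0 := by positivity
    have hfk2 : ((k).factorial : ℝ) ≠ 0 := by positivity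
    rw [h4, pow_succ]
    have h5 : Real.sqrt (2/(π*x)) * (x ^ (2*k) * x / ((2*k+1).factorial : ℝ))
        = x ^ (2*k) / ((2*k+1).factorial : ℝ) * (Real.sqrt (2/(π*x)) * x) := by ring
    rw [h5, key]
    field_simp
  rw [tsum_congr hterm, tsum_mul_left, (Real.hasSum_sinh x).tsum_eq]

lemma integral_exp_neg_mul_Ioi {t : ℝ} (ht : 0 < t) :
    ∫ x in Ioi (0:ℝ), Real.exp (-(t * x)) = 1 / t := by
  have := integral_comp_mul_left_Ioi (fun y => Real.exp (-y)) 0 ht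
  simp only [mul_zero, integral_exp_neg_Ioi_zero, smul_eq_mul, mul_one] at this
  rw [this]
  rw [one_div]

lemma inner_integral {c d x : ℝ} (hx : 0 < x) (hcd : c ≤ d) :
    ∫ t in Ioc c d, Real.exp (-(x * t)) = (Real.exp (-(c*x)) - Real.exp (-(d*x))) / x := by
  rw [← intervalIntegral.integral_of_le hcd]
  have hderiv : ∀ t ∈ uIcc c d, HasDerivAt (fun t => -Real.exp (-(x*t)) / x)
      (Real.exp (-(x*t))) t := by
    intro t _
    have h1 : HasDerivAt (fun t : ℝ => -(x*t)) (-x) t := by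
      simpa using ((hasDerivAt_id t).const_mul (-x))
    have h2 := (Real.hasDerivAt_exp (-(x*t))).comp t h1
    have h3 := (h2.neg).div_const x
    exact h3.congr_deriv (by rw [mul_neg, neg_neg, mul_div_assoc, div_self hx.ne', mul_one])
  rw [intervalIntegral.integral_eq_sub_of_hasDerivAt hderiv
    ((Real.continuous_exp.comp (by continuity)).intervalIntegrable c d)]
  rw [mul_comm x d, mul_comm x c]
  ring

lemma frullani_exp {c d : ℝ} (hc : 0 < c) (hcd : c < d) :
    ∫ x in Ioi (0:ℝ), (Real.exp (-(c*x)) - Real.exp (-(d*x))) / x = Real.log (d / c) := by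
  have hmeas : AEStronglyMeasurable (fun x : ℝ => (Real.exp (-(c*x)) - Real.exp (-(d*x))) / x)
      (volume.restrict (Ioi 0)) := by
    exact (Measurable.aestronglyMeasurable (Measurable.div (by fun_prop) measurable_id)).restrict
  have hnonneg : 0 ≤ᵐ[volume.restrict (Ioi (0:ℝ))]
      fun x => (Real.exp (-(c*x)) - Real.exp (-(d*x))) / x := by
    filter_upwards [ae_restrict_mem measurableSet_Ioi] with x hx
    have : Real.exp (-(d*x)) ≤ Real.exp (-(c*x)) := by
      apply Real.exp_le_exp.2
      have := mem_Ioi.1 hx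
      nlinarith
    exact div_nonneg (by linarith) (le_of_lt (mem_Ioi.1 hx))
  rw [integral_eq_lintegral_of_nonneg_ae hnonneg hmeas]
  have key : ∫⁻ x in Ioi (0:ℝ), ENNReal.ofReal ((Real.exp (-(c*x)) - Real.exp (-(d*x))) / x)
      = ∫⁻ x in Ioi (0:ℝ), ∫⁻ t in Ioc c d, ENNReal.ofReal (Real.exp (-(x*t))) := by
    apply setLIntegral_congr_fun measurableSet_Ioi
    intro x hx
    beta_reduce
    rw [← inner_integral hx hcd.le, ← ofReal_integral_eq_lintegral_ofReal]
    · exact (Real.continuous_exp.comp (by continuity)).integrableOn_Ioc.mono_measure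
        le_rfl |>.mono_set le_rfl
    · filter_upwards with t using (Real.exp_pos _).le
  rw [key]
  have swap : ∫⁻ x in Ioi (0:ℝ), ∫⁻ t in Ioc c d, ENNReal.ofReal (Real.exp (-(x*t)))
      = ∫⁻ t in Ioc c d, ∫⁻ x in Ioi (0:ℝ), ENNReal.ofReal (Real.exp (-(x*t))) := by
    apply lintegral_lintegral_swap
    apply Measurable.aemeasurable
    fun_prop
  rw [swap]
  have hin : ∀ t ∈ Ioc c d, ∫⁻ x in Ioi (0:ℝ), ENNReal.ofReal (Real.exp (-(x*t)))
      = ENNReal.ofReal (1 / t) := by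
    intro t ht
    have ht0 : 0 < t := hc.trans_le ht.1.le
    have hcomm : ∀ x : ℝ, -(x*t) = -t * x := fun x => by ring
    simp_rw [hcomm]
    rw [← ofReal_integral_eq_lintegral_ofReal (exp_neg_integrableOn_Ioi 0 ht0)
      (ae_of_all _ fun x => (Real.exp_pos _).le)]
    congr 1
    simp_rw [neg_mul]
    exact integral_exp_neg_mul_Ioi ht0
  rw [setLIntegral_congr_fun measurableSet_Ioc hin]
  rw [← ofReal_integral_eq_lintegral_ofReal]
  · rw [← intervalIntegral.integral_of_le hcd.le, integral_one_div, ENNReal.toReal_ofReal]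
    · exact Real.log_nonneg (by rw [le_div_iff₀ hc]; linarith)
    · intro h
      rcases Set.mem_uIcc.1 h with ⟨h1, _⟩ | ⟨h1, _⟩ <;> linarith
  · apply (continuousOn_const.div continuousOn_id (fun x hx => ?_)).integrableOn_compact
      isCompact_Icc |>.mono_set Ioc_subset_Icc_self
    exact ne_of_gt (hc.trans_le hx.1)
  · filter_upwards [ae_restrict_mem measurableSet_Ioc] with t ht
    exact div_nonneg zero_le_one (le_of_lt (hc.trans ht.1))

lemma IK_half {y : ℝ} (hy : 0 < y) :
    besselI (1/2) y * besselK (1/2) y = (1 - Real.exp (-(2*y))) / (2*y) := by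
  rw [besselI_half hy, besselK_half hy]
  have hs : Real.sqrt (2/(π*y)) * Real.sqrt (π/(2*y)) = 1/y := by
    rw [← Real.sqrt_mul (by positivity),
      show (2/(π*y)) * (π/(2*y)) = (1/y)^2 by field_simp [Real.pi_ne_zero]]
    exact Real.sqrt_sq (by positivity)
  have h1 : Real.exp y * Real.exp (-y) = 1 := by rw [← Real.exp_add]; simp
  have h2 : Real.exp (-(2*y)) = Real.exp (-y) * Real.exp (-y) := by
    rw [← Real.exp_add]; ring_nf
  rw [show Real.sqrt (2/(π*y)) * Real.sinh y * (Real.sqrt (π/(2*y)) * Real.exp (-y))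
      = (Real.sqrt (2/(π*y)) * Real.sqrt (π/(2*y))) * (Real.sinh y * Real.exp (-y)) by ring,
    hs, Real.sinh_eq, h2, Real.exp_neg]
  have hyne : y ≠ 0 := hy.ne'
  field_simp

lemma K_half_sq {y : ℝ} (hy : 0 < y) :
    besselK (1/2) y ^ 2 = π / (2*y) * Real.exp (-(2*y)) := by
  rw [besselK_half hy, mul_pow, Real.sq_sqrt (by positivity), sq, ← Real.exp_add]
  ring_nf

end Aux

theorem stmt14 (a b : ℝ) (ha : 0 < a) (hb : 0 < b) :
    (∫ x in Set.Ioi (0:ℝ), x * besselI (1 / 2) (a * x) * besselK (1 / 2) (a * x)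
      * (besselK (1 / 2) (b * x)) ^ 2)
    = (π / (4 * a * b)) * Real.log (1 + a / b) := by
  have hcong : ∀ x ∈ Ioi (0:ℝ), x * besselI (1 / 2) (a * x) * besselK (1 / 2) (a * x)
      * (besselK (1 / 2) (b * x)) ^ 2
      = (π / (4*a*b)) * ((Real.exp (-(2*b*x)) - Real.exp (-((2*a+2*b)*x))) / x) := by
    intro x hx
    have hx0 : 0 < x := hx
    have hax : 0 < a * x := mul_pos ha hx0
    have hbx : 0 < b * x := mul_pos hb hx0
    rw [show x * besselI (1 / 2) (a * x) * besselK (1 / 2) (a * x)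
        * (besselK (1 / 2) (b * x)) ^ 2
        = x * (besselI (1/2) (a*x) * besselK (1/2) (a*x)) * (besselK (1/2) (b*x)) ^ 2 by ring,
      IK_half hax, K_half_sq hbx]
    have h1 : Real.exp (-((2*a+2*b)*x)) = Real.exp (-(2*(a*x))) * Real.exp (-(2*(b*x))) := by
      rw [← Real.exp_add]; ring_nf
    have h2 : Real.exp (-(2*b*x)) = Real.exp (-(2*(b*x))) := by ring_nf
    rw [h1, h2]
    have := Real.pi_ne_zero
    field_simp
    ring
  rw [setIntegral_congr_fun measurableSet_Ioi hcong, integral_const_mul,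
    frullani_exp (by positivity) (by linarith)]
  congr 1
  rw [show (2*a+2*b) / (2*b) = 1 + a/b by field_simp; ring]
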